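/- arXiv:2411.17779 — 3 statements merged into one kernel-verified Lean document; each statement's English description precedes it below -/
import Mathlib

section
/- For all x in [-1,1] and all positive integers N, the sum f_N(x) = \sum_{n=0}^{N-1} (2n+1) P_n(x)^2 is at least N/2, where P_n denotes the Legendre polynomial of degree n. -/
/-!
Let `u = P_N² + (1 - x²) P_N'² / (N (N + 1))` be the Sonin function of `P_N`. The derivative
relations `P_{N+1}' = x P_N' + (N + 1) P_N` and `x P_{N+1}' - (N + 1) P_{N+1} = P_N'` telescope to
`f_N = (1 - x²) P_N'² + N² P_N²`, so `f_N ≥ N² u` on `[-1, 1]`. Legendre's equation gives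
`u' = 2 x P_N'² / (N (N + 1))`, hence `u(x) ≥ u(0)`. At `0` one of `P_N, P_N'` vanishes while the
other is controlled by the Wallis-type bound `(2k + 1)² P_{2k}(0)² ≥ k + 1`, so `u(0) ≥ 1 / (2N)`.
-/

/-- The Legendre polynomials, defined via the three-term recurrence
`(n+2) P_{n+2}(x) = (2n+3) x P_{n+1}(x) - (n+1) P_n(x)`, `P_0 = 1`, `P_1 = x`. -/
noncomputable def legendreP : ℕ → ℝ → ℝ
  | 0, _ => 1
  | 1, x => x
  | (n + 2), x =>
      ((2 * (n : ℝ) + 3) * x * legendreP (n + 1) x - ((n : ℝ) + 1) * legendreP n x) /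
        ((n : ℝ) + 2)

open Polynomial

noncomputable def legendrePoly : ℕ → ℝ[X]
  | 0 => 1
  | 1 => X
  | n + 2 => C ((n : ℝ) + 2)⁻¹ *
      ((2 * (n : ℝ[X]) + 3) * X * legendrePoly (n + 1) - ((n : ℝ[X]) + 1) * legendrePoly n)

theorem legendrePoly_add_two (n : ℕ) :
    ((n : ℝ[X]) + 2) * legendrePoly (n + 2) =
      (2 * (n : ℝ[X]) + 3) * X * legendrePoly (n + 1) - ((n : ℝ[X]) + 1) * legendrePoly n := by
  have h : (n + 2 : ℝ[X]) = C ((n : ℝ) + 2) := by rw [C_add, map_natCast, C_ofNat]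
  rw [legendrePoly, h, ← mul_assoc, ← C_mul, mul_inv_cancel₀ (by positivity), C_1, one_mul]

@[simp]
theorem eval_legendrePoly (n : ℕ) (x : ℝ) : (legendrePoly n).eval x = legendreP n x := by
  induction n using legendrePoly.induct with
  | case1 => simp [legendrePoly, legendreP]
  | case2 => simp [legendrePoly, legendreP]
  | case3 n ih1 ih2 =>
    simp only [legendrePoly, legendreP, eval_mul, eval_C, eval_sub, eval_add, eval_ofNat,
      eval_natCast, eval_X, eval_one, ih1, ih2]
    ring

theorem derivative_legendrePoly_succ (n : ℕ) :
    derivative (legendrePoly (n + 1)) =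
        X * derivative (legendrePoly n) + ((n : ℝ[X]) + 1) * legendrePoly n ∧
      X * derivative (legendrePoly (n + 1)) - ((n : ℝ[X]) + 1) * legendrePoly (n + 1) =
        derivative (legendrePoly n) := by
  induction n with
  | zero => simp [legendrePoly]
  | succ n ih =>
    obtain ⟨hA, hB⟩ := ih
    have hrec := legendrePoly_add_two n
    have hrec' := congrArg derivative hrec
    simp only [derivative_mul, derivative_add, derivative_sub, derivative_natCast, derivative_X,
      derivative_ofNat, derivative_one] at hrec'
    have hne : (n + 2 : ℝ[X]) ≠ 0 := by exact_mod_cast (n + 1).succ_ne_zero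
    have hA' : derivative (legendrePoly (n + 2)) =
        X * derivative (legendrePoly (n + 1)) + ((n : ℝ[X]) + 2) * legendrePoly (n + 1) := by
      apply mul_left_cancel₀ hne
      linear_combination hrec' + ((n : ℝ[X]) + 1) * hB
    push_cast
    refine ⟨by linear_combination hA', ?_⟩
    linear_combination X * hA' - hrec - hA + X * hB

theorem sum_legendrePoly_sq (N : ℕ) :
    ∑ k ∈ Finset.range N, (2 * (k : ℝ[X]) + 1) * legendrePoly k ^ 2 =
      (1 - X ^ 2) * derivative (legendrePoly N) ^ 2 + (N : ℝ[X]) ^ 2 * legendrePoly N ^ 2 := by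
  induction N with
  | zero => simp [legendrePoly]
  | succ N ih =>
    obtain ⟨hA, hB⟩ := derivative_legendrePoly_succ N
    rw [Finset.sum_range_succ, ih]
    push_cast
    set p := legendrePoly N
    set q := legendrePoly (N + 1)
    -- `(N + 1) p = q' - X p'` and `(N + 1) q = X q' - p'`, so
    -- `(N + 1)² (p² - q²) = (1 - X²) (q'² - p'²)`.
    linear_combination (X * derivative p - derivative q - (N + 1) * p) * hA
      + (X * derivative q - derivative p + (N + 1) * q) * hB

theorem legendrePoly_ode (n : ℕ) :
    (1 - X ^ 2) * derivative (derivative (legendrePoly n)) - 2 * X * derivative (legendrePoly n) +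
      (n : ℝ[X]) * ((n : ℝ[X]) + 1) * legendrePoly n = 0 := by
  cases n with
  | zero => simp [legendrePoly]
  | succ n =>
    obtain ⟨hA, hB⟩ := derivative_legendrePoly_succ n
    have hE := congrArg derivative (show (1 - X ^ 2) * derivative (legendrePoly (n + 1)) =
        ((n : ℝ[X]) + 1) * (legendrePoly n - X * legendrePoly (n + 1)) by
      linear_combination hA - X * hB)
    simp only [derivative_mul, derivative_sub, derivative_add, derivative_one, derivative_X_sq,
      derivative_natCast, derivative_X, C_ofNat] at hE
    push_cast
    linear_combination hE - ((n : ℝ[X]) + 1) * hB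

noncomputable def sonin (y y' : ℝ → ℝ) (c x : ℝ) : ℝ :=
  y x ^ 2 + (1 - x ^ 2) * y' x ^ 2 / c

section Sonin

variable {y y' y'' : ℝ → ℝ} {c : ℝ}

theorem hasDerivAt_sonin (hc : c ≠ 0) (hy : ∀ x, HasDerivAt y (y' x) x)
    (hy' : ∀ x, HasDerivAt y' (y'' x) x)
    (hode : ∀ x, (1 - x ^ 2) * y'' x - 2 * x * y' x + c * y x = 0) (x : ℝ) :
    HasDerivAt (sonin y y' c) (2 * x * y' x ^ 2 / c) x := by
  have h := ((hy x).pow 2).add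
    ((((hasDerivAt_pow 2 x).const_sub 1).mul ((hy' x).pow 2)).div_const c)
  refine h.congr_deriv ?_
  simp only [Pi.pow_apply, Nat.cast_ofNat]
  field_simp
  linear_combination y' x * hode x

theorem sonin_zero_le (hc : 0 < c) (hy : ∀ x, HasDerivAt y (y' x) x)
    (hy' : ∀ x, HasDerivAt y' (y'' x) x)
    (hode : ∀ x, (1 - x ^ 2) * y'' x - 2 * x * y' x + c * y x = 0) (x : ℝ) :
    sonin y y' c 0 ≤ sonin y y' c x := by
  -- Along the ray `s ↦ s x` the derivative is nonnegative whatever the sign of `x`.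
  have hw (s : ℝ) : HasDerivAt (fun s => sonin y y' c (s * x))
      (2 * s * x ^ 2 * y' (s * x) ^ 2 / c) s :=
    ((hasDerivAt_sonin hc.ne' hy hy' hode (s * x)).comp s (hasDerivAt_mul_const x) :).congr_deriv
      (by ring)
  have hmono : MonotoneOn (fun s => sonin y y' c (s * x)) (Set.Ici 0) := by
    refine monotoneOn_of_hasDerivWithinAt_nonneg (convex_Ici 0)
      (fun s _ => (hw s).continuousAt.continuousWithinAt) (fun s _ => (hw s).hasDerivWithinAt)
      fun s hs => ?_
    rw [interior_Ici] at hs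
    have := hs.out.le
    positivity
  simpa using hmono Set.self_mem_Ici (Set.mem_Ici.mpr zero_le_one) zero_le_one

end Sonin

theorem legendreP_add_two_zero (n : ℕ) :
    legendreP (n + 2) 0 = -(((n : ℝ) + 1) / ((n : ℝ) + 2)) * legendreP n 0 := by
  rw [legendreP]
  ring

theorem legendreP_odd_zero (k : ℕ) : legendreP (2 * k + 1) 0 = 0 := by
  induction k with
  | zero => rfl
  | succ k ih =>
    rw [show 2 * (k + 1) + 1 = 2 * k + 1 + 2 by ring, legendreP_add_two_zero, ih, mul_zero]

theorem legendreP_even_zero_sq (k : ℕ) :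
    (k : ℝ) + 1 ≤ (2 * (k : ℝ) + 1) ^ 2 * legendreP (2 * k) 0 ^ 2 := by
  induction k with
  | zero => simp [legendreP]
  | succ k ih =>
    rw [show 2 * (k + 1) = 2 * k + 2 by ring, legendreP_add_two_zero]
    push_cast
    calc (k : ℝ) + 1 + 1 ≤ ((2 * k + 3) / (2 * k + 2)) ^ 2 * (k + 1) := by
          rw [div_pow, div_mul_eq_mul_div, le_div_iff₀ (by positivity)]
          nlinarith
      _ ≤ ((2 * k + 3) / (2 * k + 2)) ^ 2 * ((2 * k + 1) ^ 2 * legendreP (2 * k) 0 ^ 2) := by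
          gcongr
      _ = _ := by ring

noncomputable def legendreSonin (n : ℕ) : ℝ → ℝ :=
  sonin (legendrePoly n).eval (derivative (legendrePoly n)).eval ((n : ℝ) * (n + 1))

theorem legendreSonin_zero_le {n : ℕ} (hn : 0 < n) (x : ℝ) :
    legendreSonin n 0 ≤ legendreSonin n x := by
  refine sonin_zero_le (by positivity) (legendrePoly n).hasDerivAt
    (derivative (legendrePoly n)).hasDerivAt (fun t => ?_) x
  have h := congrArg (eval t) (legendrePoly_ode n)
  simp only [eval_add, eval_sub, eval_mul, eval_pow, eval_one, eval_X, eval_natCast,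
    eval_ofNat, eval_zero] at h
  linear_combination h

theorem one_div_le_legendreSonin_zero (n : ℕ) :
    1 / (2 * ((n : ℝ) + 1)) ≤ legendreSonin (n + 1) 0 := by
  have hd0 := congrArg (eval 0) (derivative_legendrePoly_succ n).1
  simp only [eval_add, eval_mul, eval_X, eval_natCast, eval_one, zero_mul, zero_add,
    eval_legendrePoly] at hd0
  have hsonin : legendreSonin (n + 1) 0 =
      legendreP (n + 1) 0 ^ 2 + ((n : ℝ) + 1) / ((n : ℝ) + 2) * legendreP n 0 ^ 2 := by
    rw [legendreSonin, sonin, eval_legendrePoly, hd0]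
    push_cast
    field_simp
    ring
  rw [hsonin]
  have hz := legendreP_even_zero_sq
  rcases Nat.even_or_odd' n with ⟨k, rfl | rfl⟩
  · rw [legendreP_odd_zero]
    push_cast
    calc 1 / (2 * (2 * (k : ℝ) + 1))
        = (2 * k + 1) / (2 * k + 2) * ((k + 1) / (2 * k + 1) ^ 2) := by field_simp
      _ ≤ (2 * k + 1) / (2 * k + 2) * legendreP (2 * k) 0 ^ 2 := by
          gcongr
          rw [div_le_iff₀ (by positivity)]
          linarith [hz k]
      _ = _ := by ring
  · rw [show 2 * k + 1 + 1 = 2 * k + 2 by ring, legendreP_odd_zero, legendreP_add_two_zero]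
    push_cast
    calc 1 / (2 * (2 * (k : ℝ) + 1 + 1)) = (1 / (2 * k + 2)) ^ 2 * (k + 1) := by
          field_simp; ring
      _ ≤ (1 / (2 * k + 2)) ^ 2 * ((2 * k + 1) ^ 2 * legendreP (2 * k) 0 ^ 2) := by
          gcongr
          exact hz k
      _ = _ := by ring

theorem sq_mul_legendreSonin_le_sum {x : ℝ} (hx : x ∈ Set.Icc (-1 : ℝ) 1) (N : ℕ) :
    (N : ℝ) ^ 2 * legendreSonin N x ≤
      ∑ k ∈ Finset.range N, (2 * (k : ℝ) + 1) * legendreP k x ^ 2 := by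
  have hsum := congrArg (eval x) (sum_legendrePoly_sq N)
  simp only [eval_finsetSum, eval_add, eval_mul, eval_sub, eval_pow, eval_one, eval_X,
    eval_natCast, eval_ofNat, eval_legendrePoly] at hsum
  rw [hsum, legendreSonin, sonin, eval_legendrePoly]
  set d := eval x (derivative (legendrePoly N))
  have h1x : 0 ≤ (1 - x ^ 2) * d ^ 2 := mul_nonneg (by nlinarith [hx.1, hx.2]) (sq_nonneg d)
  have hfrac : (N : ℝ) / (N + 1) ≤ 1 := by rw [div_le_one (by positivity)]; linarith
  calc (N : ℝ) ^ 2 * (legendreP N x ^ 2 + (1 - x ^ 2) * d ^ 2 / (N * (N + 1)))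
      = (N : ℝ) / (N + 1) * ((1 - x ^ 2) * d ^ 2) + N ^ 2 * legendreP N x ^ 2 := by
        rcases eq_or_ne (N : ℝ) 0 with h | h
        · simp [h]
        · field_simp; ring
    _ ≤ (1 - x ^ 2) * d ^ 2 + N ^ 2 * legendreP N x ^ 2 := by
        gcongr ?_ + _
        exact mul_le_of_le_one_left h1x hfrac

theorem christoffel_lower_bound (N : ℕ) (hN : 1 ≤ N) (x : ℝ) (hx : x ∈ Set.Icc (-1 : ℝ) 1) :
    (N : ℝ) / 2 ≤ ∑ n ∈ Finset.range N, (2 * (n : ℝ) + 1) * (legendreP n x) ^ 2 := by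
  obtain ⟨n, rfl⟩ : ∃ n, N = n + 1 := ⟨N - 1, by omega⟩
  push_cast
  calc ((n : ℝ) + 1) / 2 = ((n : ℝ) + 1) ^ 2 * (1 / (2 * ((n : ℝ) + 1))) := by field_simp
    _ ≤ ((n : ℝ) + 1) ^ 2 * legendreSonin (n + 1) x := by
        gcongr
        exact (one_div_le_legendreSonin_zero n).trans (legendreSonin_zero_le n.succ_pos x)
    _ ≤ _ := by exact_mod_cast sq_mul_legendreSonin_le_sum hx (n + 1)
end

section
/- For every positive integer N and x in [-1,1], \sum_{n=0}^{N-1}(2n+1)P_n(x)^2 = (1-x^2)(P_N'(x))^2 + N^2 P_N(x)^2, where P_n is the Legendre polynomial of degree n. -/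
namespace legendreP

theorem zero_eq : legendreP 0 = fun _ => 1 := rfl

theorem one_eq : legendreP 1 = id := rfl

theorem add_two_eq (n : ℕ) : legendreP (n + 2) = fun x =>
    ((2 * (n : ℝ) + 3) * (x * legendreP (n + 1) x) - ((n : ℝ) + 1) * legendreP n x) /
      ((n : ℝ) + 2) := by
  funext x
  simp only [legendreP, mul_assoc]

theorem hasDerivAt_add_two {n : ℕ} {x : ℝ} (h₀ : DifferentiableAt ℝ (legendreP n) x)
    (h₁ : DifferentiableAt ℝ (legendreP (n + 1)) x) :
    HasDerivAt (legendreP (n + 2))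
      (((2 * (n : ℝ) + 3) * (legendreP (n + 1) x + x * deriv (legendreP (n + 1)) x)
        - ((n : ℝ) + 1) * deriv (legendreP n) x) / ((n : ℝ) + 2)) x := by
  rw [add_two_eq]
  exact ((((hasDerivAt_id x).mul h₁.hasDerivAt).const_mul _).sub
    (h₀.hasDerivAt.const_mul _)).div_const _ |>.congr_deriv (by simp)

theorem differentiable (n : ℕ) : Differentiable ℝ (legendreP n) := by
  induction n using Nat.twoStepInduction with
  | zero => rw [zero_eq]; exact differentiable_const _
  | one => rw [one_eq]; exact differentiable_id
  | more n h₀ h₁ => exact fun x => (hasDerivAt_add_two (h₀ x) (h₁ x)).differentiableAt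

theorem deriv_add_two (n : ℕ) (x : ℝ) :
    deriv (legendreP (n + 2)) x =
      ((2 * (n : ℝ) + 3) * (legendreP (n + 1) x + x * deriv (legendreP (n + 1)) x)
        - ((n : ℝ) + 1) * deriv (legendreP n) x) / ((n : ℝ) + 2) :=
  (hasDerivAt_add_two (differentiable n x) (differentiable (n + 1) x)).deriv

theorem deriv_succ_and_one_sub_sq_mul_deriv (n : ℕ) :
    (∀ x, deriv (legendreP (n + 1)) x = x * deriv (legendreP n) x + ((n : ℝ) + 1) * legendreP n x) ∧
    (∀ x, (1 - x ^ 2) * deriv (legendreP n) x =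
      ((n : ℝ) + 1) * (x * legendreP n x - legendreP (n + 1) x)) := by
  induction n with
  | zero => simp [zero_eq, one_eq]
  | succ n ih =>
    obtain ⟨hderiv, hmul⟩ := ih
    have hn : (n : ℝ) + 2 ≠ 0 := by positivity
    have hderiv_succ : ∀ x, deriv (legendreP (n + 2)) x =
        x * deriv (legendreP (n + 1)) x + ((n : ℝ) + 2) * legendreP (n + 1) x := by
      intro x
      rw [deriv_add_two, div_eq_iff hn]
      linear_combination ((n : ℝ) + 1) * x * hderiv x - ((n : ℝ) + 1) * hmul x
    refine ⟨fun x => by push_cast; rw [hderiv_succ x]; ring, fun x => ?_⟩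
    rw [hderiv x, congrFun (add_two_eq n) x]
    field_simp
    push_cast
    linear_combination ((n : ℝ) + 2) * x * hmul x

theorem deriv_succ (n : ℕ) (x : ℝ) :
    deriv (legendreP (n + 1)) x = x * deriv (legendreP n) x + ((n : ℝ) + 1) * legendreP n x :=
  (deriv_succ_and_one_sub_sq_mul_deriv n).1 x

theorem one_sub_sq_mul_deriv (n : ℕ) (x : ℝ) :
    (1 - x ^ 2) * deriv (legendreP n) x = ((n : ℝ) + 1) * (x * legendreP n x - legendreP (n + 1) x) :=
  (deriv_succ_and_one_sub_sq_mul_deriv n).2 x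

theorem christoffel_rhs_succ (N : ℕ) (x : ℝ) :
    (1 - x ^ 2) * deriv (legendreP (N + 1)) x ^ 2 + ((N + 1 : ℕ) : ℝ) ^ 2 * legendreP (N + 1) x ^ 2 =
      (1 - x ^ 2) * deriv (legendreP N) x ^ 2 + (N : ℝ) ^ 2 * legendreP N x ^ 2
        + (2 * (N : ℝ) + 1) * legendreP N x ^ 2 := by
  have hderiv := deriv_succ N x
  have hmul := one_sub_sq_mul_deriv N x
  push_cast
  linear_combination (1 - x ^ 2) * (deriv (legendreP (N + 1)) x + x * deriv (legendreP N) x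
      + ((N : ℝ) + 1) * legendreP N x) * hderiv
    + (((N : ℝ) + 1) * legendreP (N + 1) x + ((N : ℝ) + 1) * x * legendreP N x
      - (1 - x ^ 2) * deriv (legendreP N) x) * hmul

end legendreP

theorem christoffel_legendre_closed_form_general (N : ℕ) (x : ℝ) :
    ∑ n ∈ Finset.range N, (2 * (n : ℝ) + 1) * (legendreP n x) ^ 2 =
      (1 - x ^ 2) * (deriv (legendreP N) x) ^ 2 + (N : ℝ) ^ 2 * (legendreP N x) ^ 2 := by
  induction N with
  | zero => simp [legendreP.zero_eq]
  | succ N ih => rw [Finset.sum_range_succ, ih, legendreP.christoffel_rhs_succ]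

theorem christoffel_legendre_closed_form (N : ℕ) (hN : 1 ≤ N) (x : ℝ)
    (hx : x ∈ Set.Icc (-1 : ℝ) 1) :
    ∑ n ∈ Finset.range N, (2 * (n : ℝ) + 1) * (legendreP n x) ^ 2 =
      (1 - x ^ 2) * (deriv (legendreP N) x) ^ 2 + (N : ℝ) ^ 2 * (legendreP N x) ^ 2 :=
  christoffel_legendre_closed_form_general N x
end

section
/- For every even positive integer N, the minimum of f_N(x) = \sum_{n=0}^{N-1}(2n+1)P_n(x)^2 over x in [-1,1] is attained at x = 0, with minimal value N^2 P_N(0)^2. -/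
open Polynomial

noncomputable def LP : ℕ → Polynomial ℝ
  | 0 => 1
  | 1 => X
  | (n + 2) => C (((n : ℝ) + 2)⁻¹) *
      ((2 * C (n : ℝ) + 3) * X * LP (n + 1) - (C (n : ℝ) + 1) * LP n)

lemma LP_eval (n : ℕ) (x : ℝ) : legendreP n x = (LP n).eval x := by
  induction n using Nat.strong_induction_on with
  | _ n ih =>
    match n with
    | 0 => simp [legendreP, LP]
    | 1 => simp [legendreP, LP]
    | (n+2) =>
      have h1 := ih (n+1) (by omega)
      have h0 := ih n (by omega)
      have hne : ((n:ℝ)+2) ≠ 0 := by positivity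
      simp only [legendreP, LP, h1, h0, eval_mul, eval_sub, eval_add, eval_C, eval_X,
        eval_ofNat, eval_one]
      field_simp

lemma LP_rec (n : ℕ) : (C (n:ℝ) + 2) * LP (n+2)
    = (2 * C (n:ℝ) + 3) * X * LP (n+1) - (C (n:ℝ) + 1) * LP n := by
  have hne : ((n:ℝ) + 2) ≠ 0 := by positivity
  have hC : (C (n:ℝ) + 2 : ℝ[X]) * C (((n:ℝ)+2)⁻¹) = 1 := by
    have : (C (n:ℝ) + 2 : ℝ[X]) = C ((n:ℝ)+2) := by
      simp [C_add, map_ofNat]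
    rw [this, ← C_mul, mul_inv_cancel₀ hne, C_1]
  show (C (n:ℝ) + 2) * (C (((n : ℝ) + 2)⁻¹) *
      ((2 * C (n : ℝ) + 3) * X * LP (n + 1) - (C (n : ℝ) + 1) * LP n)) = _
  rw [← mul_assoc, hC, one_mul]

lemma LP_ne : ∀ n : ℕ, (C (n:ℝ) + 2 : ℝ[X]) ≠ 0 := by
  intro n
  have : (C (n:ℝ) + 2 : ℝ[X]) = C ((n:ℝ)+2) := by simp [C_add, map_ofNat]
  rw [this]
  simp only [ne_eq, C_eq_zero]
  positivity

lemma LP_deriv (n : ℕ) :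
    derivative (LP (n+1)) = X * derivative (LP n) + (C (n:ℝ) + 1) * LP n ∧
    (1 - X^2) * derivative (LP n) = (C (n:ℝ) + 1) * (X * LP n - LP (n+1)) := by
  induction n with
  | zero =>
    constructor
    · show derivative X = X * derivative (1:ℝ[X]) + _
      simp [LP]
    · show (1 - X^2) * derivative (1:ℝ[X]) = (C ((0:ℕ):ℝ) + 1) * (X * 1 - X)
      simp
  | succ n ih =>
    obtain ⟨ha, hb⟩ := ih
    have hrec := LP_rec n
    have hrec' := congrArg derivative hrec
    simp only [derivative_mul, derivative_add, derivative_sub, derivative_X, derivative_C,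
      derivative_ofNat, derivative_one, map_ofNat, zero_mul, add_zero, zero_add, mul_one,
      mul_zero, sub_zero] at hrec'
    have hne := LP_ne n
    have hcast : (C ((n:ℝ)+1) : ℝ[X]) = C (n:ℝ) + 1 := by simp [C_add, map_ofNat]
    constructor
    · apply mul_left_cancel₀ hne
      push_cast
      rw [hcast]
      linear_combination hrec' + (C (n:ℝ)+1) * X * ha - (C (n:ℝ)+1) * hb
    · apply mul_left_cancel₀ hne
      push_cast
      rw [hcast]
      linear_combination (C (n:ℝ)+2) * (1-X^2) * ha + (C (n:ℝ)+2) * X * hb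
        + (C (n:ℝ)+2) * hrec

lemma LP_ode (n : ℕ) : (1 - X^2) * derivative (derivative (LP n))
    = 2 * X * derivative (LP n) - C (n:ℝ) * (C (n:ℝ) + 1) * LP n := by
  obtain ⟨ha, hb⟩ := LP_deriv n
  have hb' := congrArg derivative hb
  simp only [derivative_mul, derivative_add, derivative_sub, derivative_X, derivative_C,
    derivative_one, derivative_pow, derivative_X_pow, map_ofNat, zero_mul, add_zero, zero_add,
    mul_one, mul_zero, sub_zero, zero_sub, Nat.cast_ofNat, pow_one] at hb'
  linear_combination hb' - (C (n:ℝ)+1) * ha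

lemma LP_tel (n : ℕ) :
    (1 - X^2) * (derivative (LP (n+1)))^2 + (C (n:ℝ)+1)^2 * (LP (n+1))^2
      = (1 - X^2) * (derivative (LP n))^2 + (C (n:ℝ))^2 * (LP n)^2
        + (2 * C (n:ℝ) + 1) * (LP n)^2 := by
  obtain ⟨ha, hb⟩ := LP_deriv n
  linear_combination ((1 - X^2) * (derivative (LP (n+1)) + X * derivative (LP n)
      + (C (n:ℝ)+1) * LP n)) * ha
    + (2 * (C (n:ℝ)+1) * X * LP n - ((1 - X^2) * derivative (LP n)
      + (C (n:ℝ)+1) * (X * LP n - LP (n+1)))) * hb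

lemma LP_psi_deriv (n : ℕ) :
    derivative (C (n:ℝ) * (C (n:ℝ)+1) * (LP n)^2 + (1 - X^2) * (derivative (LP n))^2)
      = 2 * X * (derivative (LP n))^2 := by
  have hode := LP_ode n
  simp only [derivative_add, derivative_mul, derivative_pow, derivative_C, derivative_X,
    derivative_sub, derivative_one, map_ofNat, zero_mul, add_zero, zero_add, mul_one, mul_zero,
    sub_zero, zero_sub, Nat.cast_ofNat, pow_one]
  linear_combination 2 * derivative (LP n) * hode

lemma LP_odd_eval_zero : ∀ k : ℕ, (LP (2*k+1)).eval 0 = 0 := by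
  intro k
  induction k with
  | zero => show (X : ℝ[X]).eval 0 = 0; simp
  | succ k ih =>
    have hrec := congrArg (eval 0) (LP_rec (2*k+1))
    simp only [eval_mul, eval_add, eval_sub, eval_C, eval_X, eval_ofNat, mul_zero,
      zero_mul, ih, sub_zero] at hrec
    have h2 : (2*(k+1)+1) = (2*k+1)+2 := by ring
    rw [h2]
    have hne : ((2*k+1:ℕ):ℝ) + 2 ≠ 0 := by positivity
    rcases mul_eq_zero.mp hrec with h | h
    · exact absurd h hne
    · exact h

lemma LP_deriv_even_zero (k : ℕ) : (derivative (LP (2*k))).eval 0 = 0 := by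
  have hb := (LP_deriv (2*k)).2
  have h := congrArg (eval 0) hb
  simp only [eval_mul, eval_add, eval_sub, eval_C, eval_X, eval_one, eval_pow,
    LP_odd_eval_zero k, mul_zero, zero_mul, sub_zero, zero_sub, zero_pow, one_mul] at h
  simpa using h

lemma LP_sum_eq (m : ℕ) (x : ℝ) :
    ∑ n ∈ Finset.range m, (2*(n:ℝ)+1) * ((LP n).eval x)^2
      = (1 - x^2) * ((derivative (LP m)).eval x)^2 + (m:ℝ)^2 * ((LP m).eval x)^2 := by
  induction m with
  | zero =>
    show (0:ℝ) = (1 - x^2) * ((derivative (1:ℝ[X])).eval x)^2 + _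
    simp
  | succ m ih =>
    rw [Finset.sum_range_succ, ih]
    have h := congrArg (eval x) (LP_tel m)
    simp only [eval_add, eval_mul, eval_sub, eval_pow, eval_one, eval_X, eval_C,
      eval_ofNat] at h
    push_cast
    linarith [h]

theorem christoffel_min_at_zero_even (N : ℕ) (hN : 0 < N) (hNe : Even N) :
    (∀ x ∈ Set.Icc (-1 : ℝ) 1,
      ∑ n ∈ Finset.range N, (2 * (n : ℝ) + 1) * (legendreP n 0) ^ 2 ≤
        ∑ n ∈ Finset.range N, (2 * (n : ℝ) + 1) * (legendreP n x) ^ 2) ∧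
    ∑ n ∈ Finset.range N, (2 * (n : ℝ) + 1) * (legendreP n 0) ^ 2 =
      (N : ℝ) ^ 2 * (legendreP N 0) ^ 2 := by
  obtain ⟨k, hk⟩ := hNe
  have hNk : N = 2 * k := by omega
  have hd0 : (derivative (LP N)).eval 0 = 0 := by
    rw [hNk]; exact LP_deriv_even_zero k
  have hS : ∀ y : ℝ, ∑ n ∈ Finset.range N, (2 * (n : ℝ) + 1) * (legendreP n y) ^ 2
      = (1 - y^2) * ((derivative (LP N)).eval y)^2 + (N:ℝ)^2 * ((LP N).eval y)^2 := by
    intro y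
    rw [← LP_sum_eq N y]
    exact Finset.sum_congr rfl fun n _ => by rw [LP_eval]
  have hS0 : ∑ n ∈ Finset.range N, (2 * (n : ℝ) + 1) * (legendreP n 0) ^ 2
      = (N:ℝ)^2 * ((LP N).eval 0)^2 := by
    rw [hS 0, hd0]; ring
  -- psi function and monotonicity
  set Ψ : ℝ[X] := C ((N:ℕ):ℝ) * (C ((N:ℕ):ℝ)+1) * (LP N)^2 + (1 - X^2) * (derivative (LP N))^2
    with hΨ
  have hΨd : derivative Ψ = 2 * X * (derivative (LP N))^2 := LP_psi_deriv N
  set f : ℝ → ℝ := fun x => Ψ.eval x with hf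
  have hderiv : ∀ x : ℝ, HasDerivAt f ((derivative Ψ).eval x) x := fun x => Ψ.hasDerivAt x
  have hDf : ∀ x : ℝ, deriv f x = 2 * x * ((derivative (LP N)).eval x)^2 := by
    intro x
    rw [(hderiv x).deriv, hΨd]
    simp [eval_mul, eval_pow]
  have hcont : Continuous f := Ψ.continuous_aeval
  have hmono : MonotoneOn f (Set.Ici 0) := by
    apply monotoneOn_of_deriv_nonneg (convex_Ici 0) hcont.continuousOn
    · intro x _
      exact (hderiv x).differentiableAt.differentiableWithinAt
    · intro x hx
      rw [interior_Ici] at hx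
      rw [hDf x]
      have : (0:ℝ) ≤ x := le_of_lt hx
      positivity
  have hanti : AntitoneOn f (Set.Iic 0) := by
    apply antitoneOn_of_deriv_nonpos (convex_Iic 0) hcont.continuousOn
    · intro x _
      exact (hderiv x).differentiableAt.differentiableWithinAt
    · intro x hx
      rw [interior_Iic] at hx
      rw [hDf x]
      have hx0 : x ≤ 0 := le_of_lt hx
      nlinarith [sq_nonneg ((derivative (LP N)).eval x)]
  have hpsi : ∀ x : ℝ, f 0 ≤ f x := by
    intro x
    rcases le_total 0 x with h | h
    · exact hmono Set.self_mem_Ici h h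
    · exact hanti h Set.self_mem_Iic h
  have hf0 : f 0 = (N:ℝ) * ((N:ℝ)+1) * ((LP N).eval 0)^2 := by
    simp only [hf, hΨ, eval_add, eval_mul, eval_sub, eval_pow, eval_one, eval_X, eval_C, hd0]
    ring
  constructor
  · intro x hx
    rw [hS0, hS x]
    have hfx := hpsi x
    rw [hf0] at hfx
    have hfxval : f x = (N:ℝ) * ((N:ℝ)+1) * ((LP N).eval x)^2
        + (1 - x^2) * ((derivative (LP N)).eval x)^2 := by
      simp only [hf, hΨ, eval_add, eval_mul, eval_sub, eval_pow, eval_one, eval_X, eval_C]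
    rw [hfxval] at hfx
    have hx2 : (0:ℝ) ≤ 1 - x^2 := by
      obtain ⟨h1, h2⟩ := hx
      nlinarith
    have hNpos : (0:ℝ) < (N:ℝ) := by exact_mod_cast hN
    nlinarith [sq_nonneg ((derivative (LP N)).eval x), sq_nonneg ((LP N).eval x),
      mul_nonneg hx2 (sq_nonneg ((derivative (LP N)).eval x))]
  · rw [hS0, LP_eval]
end
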